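/- The map T : ℓ_∞ → CBL_s sending (a_k) to the sequence of tent functions f_k (where f_k is supported on [0,k], piecewise affine with peaks of height a_k/k on each unit interval) satisfies (1/2)‖(a_k)‖_{ℓ_∞} ≤ ‖T(a_k)‖ ≤ 2‖(a_k)‖_{ℓ_∞}; hence T is an isomorphism onto its image, and consequently the space CBL_s is not separable. -/

import Mathlib

/-!
Each `f_k` is `a_k / (k + 1)` times the 1-periodic triangle wave `1 - |2 {x} - 1|` cut off
to `[0, k + 1)`. The wave has maximum `1` and mean `1/2`, so `‖f_k‖_∞ = |a_k| / (k + 1)` and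
`‖f_k‖₁ = |a_k| / 2`, which gives the two norm bounds. Since the map is linear, the images of
the indicator sequences of distinct sets `S, T ⊆ ℕ` differ in some coordinate by a function of
`L¹` norm `1/2`; these uncountably many pairwise separated points rule out a countable dense
set.
-/

open MeasureTheory Filter

/-- Membership in the space `CBL_s`: sequences of continuous, bounded, integrable
functions `ℝ → ℝ` with `‖f_k‖_∞ → 0` and `sup_k ‖f_k‖₁ < ∞`. -/
def IsCBLs (u : ℕ → ℝ → ℝ) : Prop :=
  (∀ k, Continuous (u k)) ∧ (∀ k, ∃ M : ℝ, ∀ x, |u k x| ≤ M) ∧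
  (∀ k, Integrable (u k)) ∧
  Tendsto (fun k => ⨆ x : ℝ, |u k x|) atTop (nhds 0) ∧
  ∃ M : ℝ, ∀ k, (∫ x, |u k x|) ≤ M

/-- The norm `‖(f_k)‖ = sup_k ‖f_k‖_∞ + sup_k ‖f_k‖₁` on `CBL_s`. -/
noncomputable def cblNorm (u : ℕ → ℝ → ℝ) : ℝ :=
  (⨆ k, ⨆ x : ℝ, |u k x|) + ⨆ k, ∫ x, |u k x|

/-- The `k`-th tent-function: supported on `[0, k+1]`, piecewise affine, with a
triangular peak of height `a k / (k+1)` above each unit interval. -/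
noncomputable def tentSeq (a : ℕ → ℝ) (k : ℕ) (x : ℝ) : ℝ :=
  if 0 ≤ x ∧ x < (k + 1 : ℝ) then (a k / (k + 1)) * (1 - |2 * (x - (⌊x⌋ : ℝ)) - 1|) else 0

open Set

noncomputable def triangleWave (x : ℝ) : ℝ := 1 - |2 * Int.fract x - 1|

lemma triangleWave_nonneg (x : ℝ) : 0 ≤ triangleWave x := by
  have := Int.fract_nonneg x
  have := Int.fract_lt_one x
  rw [triangleWave, sub_nonneg, abs_le]
  constructor <;> linarith

lemma triangleWave_le_one (x : ℝ) : triangleWave x ≤ 1 :=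
  sub_le_self _ (abs_nonneg _)

lemma triangleWave_intCast (n : ℤ) : triangleWave n = 0 := by
  simp [triangleWave]

lemma triangleWave_half : triangleWave (1 / 2) = 1 := by
  have hfract : Int.fract (1 / 2 : ℝ) = 1 / 2 := Int.fract_eq_self.2 ⟨by norm_num, by norm_num⟩
  norm_num [triangleWave, hfract]

lemma continuous_triangleWave : Continuous triangleWave :=
  ContinuousOn.comp_fract'' (f := fun y : ℝ => 1 - |2 * y - 1|) (by fun_prop) (by norm_num)

lemma periodic_triangleWave : Function.Periodic triangleWave 1 := fun x => by
  simp only [triangleWave, Int.fract_add_one]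

lemma integral_triangleWave_zero_one : ∫ x in (0 : ℝ)..1, triangleWave x = 1 / 2 := by
  have htri : Continuous fun x : ℝ => 1 - |2 * x - 1| := by fun_prop
  have hfract : EqOn triangleWave (fun x => 1 - |2 * x - 1|) (uIcc 0 1) := by
    intro x hx
    rw [uIcc_of_le zero_le_one] at hx
    rcases hx.2.eq_or_lt with rfl | hx1
    · norm_num [triangleWave]
    · rw [triangleWave, Int.fract_eq_self.2 ⟨hx.1, hx1⟩]
  have hleft : EqOn (fun x : ℝ => 1 - |2 * x - 1|) (fun x => 2 * x) (uIcc 0 (1 / 2)) := by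
    intro x hx
    rw [uIcc_of_le (by norm_num)] at hx
    simp only
    rw [abs_of_nonpos (by linarith [hx.2])]
    ring
  have hright : EqOn (fun x : ℝ => 1 - |2 * x - 1|) (fun x => 2 * (1 - x)) (uIcc (1 / 2) 1) := by
    intro x hx
    rw [uIcc_of_le (by norm_num)] at hx
    simp only
    rw [abs_of_nonneg (by linarith [hx.1])]
    ring
  rw [intervalIntegral.integral_congr hfract,
    ← intervalIntegral.integral_add_adjacent_intervals (b := 1 / 2)
      (htri.intervalIntegrable _ _) (htri.intervalIntegrable _ _),
    intervalIntegral.integral_congr hleft, intervalIntegral.integral_congr hright,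
    intervalIntegral.integral_comp_sub_left (fun x => 2 * x), intervalIntegral.integral_const_mul,
    intervalIntegral.integral_const_mul, integral_id, integral_id]
  norm_num

lemma integral_triangleWave_zero_natCast (n : ℕ) :
    ∫ x in (0 : ℝ)..n, triangleWave x = n / 2 := by
  have := periodic_triangleWave.intervalIntegral_add_zsmul_eq n 0
    (continuous_triangleWave.intervalIntegrable)
  simp only [zero_add, zsmul_eq_mul, mul_one, Int.cast_natCast] at this
  rw [this, integral_triangleWave_zero_one]
  ring

lemma tentSeq_eq_indicator (a : ℕ → ℝ) (k : ℕ) (x : ℝ) :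
    tentSeq a k x = a k / (k + 1) * (Ico 0 ((k : ℝ) + 1)).indicator triangleWave x := by
  by_cases hx : 0 ≤ x ∧ x < (k + 1 : ℝ)
  · rw [tentSeq, if_pos hx, indicator_of_mem (show x ∈ Ico _ _ from hx)]
    rfl
  · rw [tentSeq, if_neg hx, indicator_of_notMem (show x ∉ Ico _ _ from hx), mul_zero]

lemma abs_tentSeq (a : ℕ → ℝ) (k : ℕ) (x : ℝ) :
    |tentSeq a k x| = |a k| / (k + 1) * (Ico 0 ((k : ℝ) + 1)).indicator triangleWave x := by
  rw [tentSeq_eq_indicator, abs_mul, abs_div, abs_of_pos (by positivity : (0 : ℝ) < k + 1),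
    abs_of_nonneg (indicator_nonneg (fun x _ => triangleWave_nonneg x) x)]

lemma continuous_tentSeq (a : ℕ → ℝ) (k : ℕ) : Continuous (tentSeq a k) := by
  have hind : Continuous ((Ico 0 ((k : ℝ) + 1)).indicator triangleWave) := by
    refine continuous_indicator (fun x hx => ?_) continuous_triangleWave.continuousOn
    rw [frontier_Ico (by positivity)] at hx
    rcases hx with rfl | rfl
    · exact_mod_cast triangleWave_intCast 0
    · exact_mod_cast triangleWave_intCast (k + 1)
  exact (continuous_const.mul hind).congr fun x => (tentSeq_eq_indicator a k x).symm

lemma integrable_tentSeq (a : ℕ → ℝ) (k : ℕ) : Integrable (tentSeq a k) := by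
  have hind : Integrable ((Ico 0 ((k : ℝ) + 1)).indicator triangleWave) :=
    (integrable_indicator_iff measurableSet_Ico).2
      (continuous_triangleWave.integrableOn_Icc.mono_set Ico_subset_Icc_self)
  simpa only [funext (tentSeq_eq_indicator a k)] using hind.const_mul (a k / (k + 1))

lemma abs_tentSeq_le (a : ℕ → ℝ) (k : ℕ) (x : ℝ) : |tentSeq a k x| ≤ |a k| / (k + 1) := by
  rw [abs_tentSeq]
  refine mul_le_of_le_one_right (by positivity) ?_
  exact (indicator_le_self' (fun x _ => triangleWave_nonneg x) x).trans (triangleWave_le_one x)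

lemma iSup_abs_tentSeq (a : ℕ → ℝ) (k : ℕ) : ⨆ x, |tentSeq a k x| = |a k| / (k + 1) := by
  refine ciSup_eq_of_forall_le_of_forall_lt_exists_gt (abs_tentSeq_le a k)
    fun w hw => ⟨1 / 2, ?_⟩
  have hhalf : (1 / 2 : ℝ) ∈ Ico 0 ((k : ℝ) + 1) :=
    ⟨by norm_num, by linarith [k.cast_nonneg (α := ℝ)]⟩
  rwa [abs_tentSeq, indicator_of_mem hhalf, triangleWave_half, mul_one]

lemma integral_abs_tentSeq (a : ℕ → ℝ) (k : ℕ) : ∫ x, |tentSeq a k x| = |a k| / 2 := by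
  have hk : (0 : ℝ) < k + 1 := by positivity
  simp only [abs_tentSeq, integral_const_mul, integral_indicator measurableSet_Ico]
  rw [integral_Ico_eq_integral_Ioo, ← integral_Ioc_eq_integral_Ioo,
    ← intervalIntegral.integral_of_le hk.le]
  have := integral_triangleWave_zero_natCast (k + 1)
  push_cast at this
  rw [this]
  field_simp

lemma integral_abs_tentSeq_sub_tentSeq (a b : ℕ → ℝ) (k : ℕ) :
    ∫ x, |tentSeq a k x - tentSeq b k x| = |a k - b k| / 2 := by
  have hsub : ∀ x, tentSeq a k x - tentSeq b k x = tentSeq (a - b) k x := fun x => by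
    simp only [tentSeq_eq_indicator, Pi.sub_apply]
    ring
  simp only [hsub, integral_abs_tentSeq, Pi.sub_apply]

lemma isCBLs_tentSeq {a : ℕ → ℝ} (hb : ∃ M : ℝ, ∀ k, |a k| ≤ M) : IsCBLs (tentSeq a) := by
  obtain ⟨M, hM⟩ := hb
  refine ⟨continuous_tentSeq a, fun k => ⟨_, abs_tentSeq_le a k⟩, integrable_tentSeq a, ?_,
    ⟨M / 2, fun k => ?_⟩⟩
  · simp only [iSup_abs_tentSeq]
    refine squeeze_zero (fun k => by positivity) (fun k => ?_)
      (tendsto_const_div_atTop_nhds_zero_nat M |>.comp (tendsto_add_atTop_nat 1))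
    simp only [Function.comp_apply, Nat.cast_add, Nat.cast_one]
    gcongr
    exact hM k
  · rw [integral_abs_tentSeq]
    linarith [hM k]

lemma cblNorm_tentSeq (a : ℕ → ℝ) :
    cblNorm (tentSeq a) = (⨆ k, |a k| / (k + 1)) + (⨆ k, |a k|) / 2 := by
  simp only [cblNorm, iSup_abs_tentSeq, integral_abs_tentSeq, div_eq_mul_inv (⨆ k, |a k|),
    Real.iSup_mul_of_nonneg (inv_nonneg.2 zero_le_two), ← div_eq_mul_inv]

lemma half_iSup_abs_le_cblNorm_tentSeq (a : ℕ → ℝ) :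
    (1 / 2) * (⨆ k, |a k|) ≤ cblNorm (tentSeq a) := by
  have : 0 ≤ ⨆ k, |a k| / (k + 1) := Real.iSup_nonneg fun k => by positivity
  rw [cblNorm_tentSeq]
  linarith

lemma cblNorm_tentSeq_le {a : ℕ → ℝ} (hb : BddAbove (range fun k => |a k|)) :
    cblNorm (tentSeq a) ≤ 2 * (⨆ k, |a k|) := by
  have hdiv : ⨆ k, |a k| / (k + 1) ≤ ⨆ k, |a k| :=
    ciSup_le fun k => (div_le_self (abs_nonneg _) (by simp)).trans (le_ciSup hb k)
  have : 0 ≤ ⨆ k, |a k| := Real.iSup_nonneg fun k => abs_nonneg _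
  rw [cblNorm_tentSeq]
  linarith

lemma integral_abs_sub_le_add {α : Type*} [MeasurableSpace α] {μ : Measure α} {f g h : α → ℝ}
    (hf : Integrable f μ) (hg : Integrable g μ) (hh : Integrable h μ) :
    ∫ x, |f x - h x| ∂μ ≤ (∫ x, |f x - g x| ∂μ) + ∫ x, |h x - g x| ∂μ := by
  calc ∫ x, |f x - h x| ∂μ ≤ ∫ x, (|f x - g x| + |h x - g x|) ∂μ :=
        integral_mono (hf.sub hh).abs ((hf.sub hg).abs.add (hh.sub hg).abs) fun x => by
          simpa only [abs_sub_comm (h x)] using abs_sub_le (f x) (g x) (h x)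
    _ = (∫ x, |f x - g x| ∂μ) + ∫ x, |h x - g x| ∂μ :=
        integral_add (hf.sub hg).abs (hh.sub hg).abs

lemma integral_abs_sub_le_cblNorm {u v : ℕ → ℝ → ℝ} (hu : IsCBLs u) (hv : IsCBLs v) (k : ℕ) :
    ∫ x, |u k x - v k x| ≤ cblNorm (u - v) := by
  obtain ⟨-, -, hui, -, Mu, hMu⟩ := hu
  obtain ⟨-, -, hvi, -, Mv, hMv⟩ := hv
  -- `⨆` of an unbounded family of reals is `0`, so the bound on the `L¹` norms is needed here.
  have hbdd : BddAbove (range fun k => ∫ x, |(u - v) k x|) := by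
    refine ⟨Mu + Mv, forall_mem_range.2 fun k => ?_⟩
    have := integral_abs_sub_le_add (hui k) (integrable_zero ℝ ℝ volume) (hvi k)
    simp only [Pi.zero_apply, sub_zero] at this
    exact this.trans (add_le_add (hMu k) (hMv k))
  have : 0 ≤ ⨆ k, ⨆ x, |(u - v) k x| :=
    Real.iSup_nonneg fun _ => Real.iSup_nonneg fun _ => abs_nonneg _
  have : ∫ x, |u k x - v k x| ≤ ⨆ k, ∫ x, |(u - v) k x| := le_ciSup hbdd k
  rw [cblNorm]
  linarith

lemma not_exists_countable_dense_of_separated {ι : Type*} [Uncountable ι]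
    {u : ι → ℕ → ℝ → ℝ} (hu : ∀ i, IsCBLs (u i)) {δ : ℝ} (hδ : 0 < δ)
    (hsep : ∀ i j, i ≠ j → ∃ k, δ ≤ ∫ x, |u i k x - u j k x|) :
    ¬ ∃ D : Set (ℕ → ℝ → ℝ), D.Countable ∧ (∀ v ∈ D, IsCBLs v) ∧
      ∀ u : ℕ → ℝ → ℝ, IsCBLs u → ∀ ε : ℝ, 0 < ε → ∃ v ∈ D, cblNorm (u - v) < ε := by
  rintro ⟨D, hDc, hD, hdense⟩
  choose v hvD hv using fun i => hdense (u i) (hu i) (δ / 2) (half_pos hδ)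
  have := hDc.to_subtype
  obtain ⟨i, j, hvij, hij⟩ :=
    Function.not_injective_iff.1 <|
      not_injective_uncountable_countable fun i => (⟨v i, hvD i⟩ : D)
  have hvij : v i = v j := congrArg Subtype.val hvij
  obtain ⟨k, hk⟩ := hsep i j hij
  have hvi := hD _ (hvD i)
  refine lt_irrefl δ ?_
  calc δ ≤ ∫ x, |u i k x - u j k x| := hk
    _ ≤ (∫ x, |u i k x - v i k x|) + ∫ x, |u j k x - v i k x| :=
        integral_abs_sub_le_add ((hu i).2.2.1 k) (hvi.2.2.1 k) ((hu j).2.2.1 k)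
    _ ≤ cblNorm (u i - v i) + cblNorm (u j - v j) := by
        rw [← hvij]
        exact add_le_add (integral_abs_sub_le_cblNorm (hu i) hvi k)
          (integral_abs_sub_le_cblNorm (hu j) hvi k)
    _ < δ / 2 + δ / 2 := add_lt_add (hv i) (hv j)
    _ = δ := add_halves δ

instance uncountable_set_nat : Uncountable (Set ℕ) :=
  ⟨fun _ => (Countable.exists_injective_nat (Set ℕ)).elim fun f hf =>
    Function.cantor_injective f hf⟩

theorem stmt18 (a : ℕ → ℝ) (hb : ∃ M : ℝ, ∀ k, |a k| ≤ M) :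
    IsCBLs (tentSeq a) ∧
    (1 / 2) * (⨆ k, |a k|) ≤ cblNorm (tentSeq a) ∧
    cblNorm (tentSeq a) ≤ 2 * (⨆ k, |a k|) ∧
    ¬ ∃ D : Set (ℕ → ℝ → ℝ), D.Countable ∧ (∀ v ∈ D, IsCBLs v) ∧
      ∀ u : ℕ → ℝ → ℝ, IsCBLs u → ∀ ε : ℝ, 0 < ε → ∃ v ∈ D, cblNorm (u - v) < ε := by
  refine ⟨isCBLs_tentSeq hb, half_iSup_abs_le_cblNorm_tentSeq a,
    cblNorm_tentSeq_le (hb.imp fun M hM => forall_mem_range.2 hM), ?_⟩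
  refine not_exists_countable_dense_of_separated
    (u := fun S : Set ℕ => tentSeq (S.indicator 1)) (fun S => isCBLs_tentSeq ⟨1, fun k => ?_⟩)
    one_half_pos fun S T hST => ?_
  · by_cases hk : k ∈ S <;> simp [hk]
  · obtain ⟨k, hk⟩ := not_forall.1 (mt Set.ext hST)
    refine ⟨k, (integral_abs_tentSeq_sub_tentSeq _ _ k).ge.trans' ?_⟩
    by_cases hkS : k ∈ S <;> by_cases hkT : k ∈ T <;> simp_all
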